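/- Let $0\to\mathcal{P}\hookrightarrow\mathcal{L}\xrightarrow{\pi}\mathcal{Q}\to 0$ be an abelian extension of 3-Lie superalgebras with $[\mathcal{P},\mathcal{P},\mathcal{L}]=0$, and let $(\mathcal{D}_p,\mathcal{D}_q)$ be an even compatible pair of superderivations. If $(\mathcal{D}_p,\mathcal{D}_q)$ is extensible via $\mathcal{D}_l\in\mathrm{Der}(\mathcal{L})$, then with $\mu(x)=\mathcal{D}_l s(x)-s(\mathcal{D}_q x)\in\mathcal{P}$ one has $Ob^{\Omega}_{(\mathcal{D}_p,\mathcal{D}_q)}=\delta_{\Phi}\mu$; in particular the obstruction class $[Ob^{\Omega}_{(\mathcal{D}_p,\mathcal{D}_q)}]\in\mathbb{H}^1(\mathcal{Q};\mathcal{P})$ is trivial. -/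
import Mathlib


/-! Common definitions: 3-Lie superalgebras, representations, cohomology operators. -/

def gsign (k : Type*) [Field k] (a : ZMod 2) : k := if a = 0 then 1 else -1

/-- A 3-Lie superalgebra: a `ℤ₂`-graded vector space with a trilinear graded
skew-symmetric bracket satisfying the graded fundamental (Filippov) identity. -/
structure TLSA (k G : Type*) [Field k] [AddCommGroup G] [Module k G] where
  br : G → G → G → G
  gr : ZMod 2 → Submodule k G
  decomp : DirectSum.IsInternal gr
  lin₁ : ∀ y z, IsLinearMap k fun x => br x y z
  lin₂ : ∀ x z, IsLinearMap k fun y => br x y z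
  lin₃ : ∀ x y, IsLinearMap k fun z => br x y z
  grade : ∀ (a b c : ZMod 2) (x y z : G), x ∈ gr a → y ∈ gr b → z ∈ gr c →
    br x y z ∈ gr (a + b + c)
  skew₁ : ∀ (a b : ZMod 2) (x y z : G), x ∈ gr a → y ∈ gr b →
    br x y z = - gsign k (a * b) • br y x z
  skew₂ : ∀ (b c : ZMod 2) (x y z : G), y ∈ gr b → z ∈ gr c →
    br x y z = - gsign k (b * c) • br x z y
  fund : ∀ (a b c d e : ZMod 2) (x1 x2 x3 x4 x5 : G),
    x1 ∈ gr a → x2 ∈ gr b → x3 ∈ gr c → x4 ∈ gr d → x5 ∈ gr e →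
    br x1 x2 (br x3 x4 x5) =
      br (br x1 x2 x3) x4 x5 + gsign k (c * (a + b)) • br x3 (br x1 x2 x4) x5
        + gsign k ((a + b) * (c + d)) • br x3 x4 (br x1 x2 x5)

section Defs
variable {k G P : Type*} [Field k] [AddCommGroup G] [Module k G] [AddCommGroup P] [Module k P]

/-- Trilinearity of a map of three variables. -/
def Trilin3 (k : Type*) [Field k] {G P : Type*} [AddCommGroup G] [Module k G]
    [AddCommGroup P] [Module k P] (f : G → G → G → P) : Prop :=
  (∀ y z, IsLinearMap k fun x => f x y z) ∧ (∀ x z, IsLinearMap k fun y => f x y z) ∧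
    ∀ x y, IsLinearMap k (f x y)

/-- A representation of the 3-Lie superalgebra `T` on the graded space `(P, Pgr)`. -/
def IsTLSARep (T : TLSA k G) (Pgr : ZMod 2 → Submodule k P) (Φ : G → G → P → P) : Prop :=
  (∀ y v, IsLinearMap k fun x => Φ x y v) ∧
  (∀ x v, IsLinearMap k fun y => Φ x y v) ∧
  (∀ x y, IsLinearMap k (Φ x y)) ∧
  (∀ (a b c : ZMod 2) x y v, x ∈ T.gr a → y ∈ T.gr b → v ∈ Pgr c → Φ x y v ∈ Pgr (a + b + c)) ∧
  (∀ (a b : ZMod 2) x y, x ∈ T.gr a → y ∈ T.gr b → ∀ v, Φ x y v = - gsign k (a * b) • Φ y x v) ∧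
  (∀ (a b c d : ZMod 2) x1 x2 x3 x4, x1 ∈ T.gr a → x2 ∈ T.gr b → x3 ∈ T.gr c → x4 ∈ T.gr d → ∀ v,
    Φ x1 x2 (Φ x3 x4 v) = Φ (T.br x1 x2 x3) x4 v + gsign k (c * (a + b)) • Φ x3 (T.br x1 x2 x4) v
      + gsign k ((a + b) * (c + d)) • Φ x3 x4 (Φ x1 x2 v)) ∧
  (∀ (a b c d : ZMod 2) x1 x2 x3 x4, x1 ∈ T.gr a → x2 ∈ T.gr b → x3 ∈ T.gr c → x4 ∈ T.gr d → ∀ v,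
    Φ x1 (T.br x2 x3 x4) v = gsign k ((a + b) * (c + d)) • Φ x3 x4 (Φ x1 x2 v)
      - gsign k (a * (b + d) + c * d) • Φ x2 x4 (Φ x1 x3 v)
      + gsign k (a * (b + c)) • Φ x2 x3 (Φ x1 x4 v))

/-- The 3-cochain `Om` is even (grading-preserving). -/
def Even3 (T : TLSA k G) (Pgr : ZMod 2 → Submodule k P) (Om : G → G → G → P) : Prop :=
  ∀ (a b c : ZMod 2) x y z, x ∈ T.gr a → y ∈ T.gr b → z ∈ T.gr c → Om x y z ∈ Pgr (a + b + c)

/-- The 2-cocycle condition `δ_Φ Om = 0` for 3-Lie superalgebra cohomology. -/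
def IsCocycle2 (T : TLSA k G) (Φ : G → G → P → P) (Om : G → G → G → P) : Prop :=
  ∀ (a b c d e : ZMod 2) x1 x2 x3 x4 x5,
    x1 ∈ T.gr a → x2 ∈ T.gr b → x3 ∈ T.gr c → x4 ∈ T.gr d → x5 ∈ T.gr e →
    Om (T.br x1 x2 x3) x4 x5 + gsign k (c * (a + b)) • Om x3 (T.br x1 x2 x4) x5
      + gsign k ((a + b) * (c + d)) • Om x3 x4 (T.br x1 x2 x5) - Om x1 x2 (T.br x3 x4 x5)
    = Φ x1 x2 (Om x3 x4 x5) - gsign k ((a + b) * (c + d)) • Φ x3 x4 (Om x1 x2 x5)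
      - gsign k ((d + e) * (a + b + c)) • Φ x4 x5 (Om x1 x2 x3)
      - gsign k ((c + e) * (a + b) + e * (c + d)) • Φ x5 x3 (Om x1 x2 x4)

/-- `Om = δ_Φ μ` where `μ` is a 1-cochain of degree `μdeg`. -/
def IsDelta1 (T : TLSA k G) (Φ : G → G → P → P) (μdeg : ZMod 2) (μ : G → P)
    (Om : G → G → G → P) : Prop :=
  ∀ (a b c : ZMod 2) x y z, x ∈ T.gr a → y ∈ T.gr b → z ∈ T.gr c →
    Om x y z = - μ (T.br x y z) + gsign k (μdeg * (a + b)) • Φ x y (μ z)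
      + gsign k ((μdeg + a) * (b + c)) • Φ y z (μ x)
      + gsign k (μdeg * (a + c) + c * (a + b)) • Φ z x (μ y)

/-- A superderivation of degree `α` of the 3-Lie superalgebra `T`. -/
def IsSDer (T : TLSA k G) (α : ZMod 2) (D : G →ₗ[k] G) : Prop :=
  (∀ (a : ZMod 2) x, x ∈ T.gr a → D x ∈ T.gr (a + α)) ∧
  ∀ (a b c : ZMod 2) x y z, x ∈ T.gr a → y ∈ T.gr b → z ∈ T.gr c →
    D (T.br x y z) = T.br (D x) y z + gsign k (α * a) • T.br x (D y) z
      + gsign k (α * (a + b)) • T.br x y (D z)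

/-- Compatibility of a pair `(Dp, Dq)` of degree `α` with the representation `Φ`. -/
def Compatible (T : TLSA k G) (Pgr : ZMod 2 → Submodule k P) (Φ : G → G → P → P)
    (α : ZMod 2) (Dp : P →ₗ[k] P) (Dq : G →ₗ[k] G) : Prop :=
  ∀ (a b : ZMod 2) x y, x ∈ T.gr a → y ∈ T.gr b → ∀ v,
    Dp (Φ x y v) - gsign k (α * (a + b)) • Φ x y (Dp v)
      = Φ (Dq x) y v + gsign k (α * a) • Φ x (Dq y) v

/-- `Ob = Ob^{Om}_{(Dp,Dq)}`, the obstruction 2-cochain. -/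
def IsOb (T : TLSA k G) (α : ZMod 2) (Dp : P →ₗ[k] P) (Dq : G →ₗ[k] G)
    (Om Ob : G → G → G → P) : Prop :=
  ∀ (a b c : ZMod 2) x y z, x ∈ T.gr a → y ∈ T.gr b → z ∈ T.gr c →
    Ob x y z = Dp (Om x y z) - Om (Dq x) y z - gsign k (α * a) • Om x (Dq y) z
      - gsign k (α * (a + b)) • Om x y (Dq z)

end Defs


section Aux
variable {k G : Type*} [Field k] [AddCommGroup G] [Module k G]

lemma gsign_zero (k : Type*) [Field k] : gsign k 0 = 1 := rfl

lemma gsign_mul (k : Type*) [Field k] (a b : ZMod 2) :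
    gsign k a * gsign k b = gsign k (a + b) := by
  have h : ∀ c : ZMod 2, c = 0 ∨ c = 1 := by decide
  have h11 : (1 + 1 : ZMod 2) = 0 := by decide
  rcases h a with ha | ha <;> rcases h b with hb | hb <;> subst ha <;> subst hb <;>
    simp [gsign, h11]

lemma gsign_sq (k : Type*) [Field k] (a : ZMod 2) : gsign k a * gsign k a = 1 := by
  rw [gsign_mul]
  have : a + a = 0 := by revert a; decide
  rw [this, gsign_zero]

/-- Move a first-slot graded element to the last slot. -/
lemma swap_first_to_last (T : TLSA k G) (a b c : ZMod 2) (u y z : G)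
    (hu : u ∈ T.gr a) (hy : y ∈ T.gr b) (hz : z ∈ T.gr c) :
    T.br u y z = gsign k (a * (b + c)) • T.br y z u := by
  rw [T.skew₁ a b u y z hu hy, T.skew₂ a c y u z hu hz, smul_smul, neg_mul_neg,
    gsign_mul, ← mul_add]

/-- Move a middle-slot graded element to the last slot (cyclic form). -/
lemma swap_middle (T : TLSA k G) (a b c : ZMod 2) (x u z : G)
    (hx : x ∈ T.gr a) (hu : u ∈ T.gr b) (hz : z ∈ T.gr c) :
    T.br x u z = gsign k (c * (a + b)) • T.br z x u := by
  rw [T.skew₁ c a z x u hz hx, T.skew₂ c b x z u hz hu, smul_smul, smul_smul,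
    mul_assoc, neg_mul_neg, gsign_mul, ← mul_add, gsign_sq, one_smul]

end Aux

/-- A homomorphism of 3-Lie superalgebras: even linear and bracket-preserving. -/
def IsTLSAHom {k G1 G2 : Type*} [Field k] [AddCommGroup G1] [Module k G1]
    [AddCommGroup G2] [Module k G2] (T1 : TLSA k G1) (T2 : TLSA k G2) (f : G1 → G2) : Prop :=
  IsLinearMap k f ∧ (∀ (a : ZMod 2) x, x ∈ T1.gr a → f x ∈ T2.gr a) ∧
    ∀ x y z, f (T1.br x y z) = T2.br (f x) (f y) (f z)

/-- An abelian extension `0 → P → L → Q → 0` of 3-Lie superalgebras with `[P,P,L] = 0`. -/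
structure AbExt {k Pm Lm Qm : Type*} [Field k] [AddCommGroup Pm] [Module k Pm]
    [AddCommGroup Lm] [Module k Lm] [AddCommGroup Qm] [Module k Qm]
    (TP : TLSA k Pm) (TL : TLSA k Lm) (TQ : TLSA k Qm) where
  i : Pm →ₗ[k] Lm
  pr : Lm →ₗ[k] Qm
  i_inj : Function.Injective i
  pr_surj : Function.Surjective pr
  exact : LinearMap.range i = LinearMap.ker pr
  i_hom : IsTLSAHom TP TL i
  pr_hom : IsTLSAHom TL TQ pr
  abelian : ∀ u v l, TL.br (i u) (i v) l = 0

/-- An even linear section of the projection of an abelian extension. -/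
def IsSection {k Pm Lm Qm : Type*} [Field k] [AddCommGroup Pm] [Module k Pm]
    [AddCommGroup Lm] [Module k Lm] [AddCommGroup Qm] [Module k Qm]
    {TP : TLSA k Pm} {TL : TLSA k Lm} {TQ : TLSA k Qm}
    (E : AbExt TP TL TQ) (s : Qm →ₗ[k] Lm) : Prop :=
  (∀ x, E.pr (s x) = x) ∧ ∀ (a : ZMod 2) x, x ∈ TQ.gr a → s x ∈ TL.gr a

variable {k Pm Lm Qm G : Type*} [Field k] [AddCommGroup Pm] [Module k Pm]
  [AddCommGroup Lm] [Module k Lm] [AddCommGroup Qm] [Module k Qm]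
  [AddCommGroup G] [Module k G]

/-- if an even compatible pair `(Dp, Dq)` is extensible via `Dl`,
then `μ(x) = Dl(s(x)) - s(Dq(x))` lies in `P` and `Ob^Ω_{(Dp,Dq)} = δ_Φ μ`;
the obstruction class is trivial. -/
theorem extensible_implies_obstruction_trivial
    {TP : TLSA k Pm} {TL : TLSA k Lm} {TQ : TLSA k Qm}
    (E : AbExt TP TL TQ) (s : Qm →ₗ[k] Lm) (hs : IsSection E s)
    (Φ : Qm → Qm → Pm → Pm)
    (hΦ : ∀ x y v, E.i (Φ x y v) = TL.br (s x) (s y) (E.i v))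
    (Om : Qm → Qm → Qm → Pm)
    (hOm : ∀ x y z, E.i (Om x y z) = TL.br (s x) (s y) (s z) - s (TQ.br x y z))
    (Dp : Pm →ₗ[k] Pm) (hDp : IsSDer TP 0 Dp)
    (Dq : Qm →ₗ[k] Qm) (hDq : IsSDer TQ 0 Dq)
    (hcomp : Compatible TQ TP.gr Φ 0 Dp Dq)
    (Dl : Lm →ₗ[k] Lm) (hDl : IsSDer TL 0 Dl)
    (hrestrict : ∀ v, Dl (E.i v) = E.i (Dp v))
    (hproj : ∀ l, E.pr (Dl l) = Dq (E.pr l))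
    (Ob : Qm → Qm → Qm → Pm) (hOb : IsOb TQ 0 Dp Dq Om Ob) :
    (∀ x, Dl (s x) - s (Dq x) ∈ LinearMap.range E.i) ∧
      ∀ μ : Qm →ₗ[k] Pm, (∀ x, E.i (μ x) = Dl (s x) - s (Dq x)) →
        IsDelta1 TQ Φ 0 μ Ob := by
  constructor
  · intro x
    rw [E.exact, LinearMap.mem_ker, map_sub, hproj, hs.1, hs.1, sub_self]
  · intro μ hμ a b c x y z hx hy hz
    -- simplify the sign exponents (μdeg = 0, α = 0)
    simp only [zero_mul, zero_add, gsign_zero, one_smul]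
    -- graded memberships
    have hsx : s x ∈ TL.gr a := hs.2 a x hx
    have hsy : s y ∈ TL.gr b := hs.2 b y hy
    have hsz : s z ∈ TL.gr c := hs.2 c z hz
    have hDqx : Dq x ∈ TQ.gr a := by simpa using hDq.1 a x hx
    have hDqy : Dq y ∈ TQ.gr b := by simpa using hDq.1 b y hy
    have hDqz : Dq z ∈ TQ.gr c := by simpa using hDq.1 c z hz
    have hux : E.i (μ x) ∈ TL.gr a := by
      rw [hμ]
      exact Submodule.sub_mem _ (by simpa using hDl.1 a _ hsx) (hs.2 a _ hDqx)
    have huy : E.i (μ y) ∈ TL.gr b := by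
      rw [hμ]
      exact Submodule.sub_mem _ (by simpa using hDl.1 b _ hsy) (hs.2 b _ hDqy)
    apply E.i_inj
    -- expand the left-hand side
    have hOb' := hOb a b c x y z hx hy hz
    simp only [zero_mul, gsign_zero, one_smul] at hOb'
    have hDl' := hDl.2 a b c (s x) (s y) (s z) hsx hsy hsz
    simp only [zero_mul, gsign_zero, one_smul] at hDl'
    have hDq' := hDq.2 a b c x y z hx hy hz
    simp only [zero_mul, gsign_zero, one_smul] at hDq'
    have hDlsx : Dl (s x) = E.i (μ x) + s (Dq x) := by rw [hμ x]; abel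
    have hDlsy : Dl (s y) = E.i (μ y) + s (Dq y) := by rw [hμ y]; abel
    have hDlsz : Dl (s z) = E.i (μ z) + s (Dq z) := by rw [hμ z]; abel
    have lhs_eq : E.i (Ob x y z)
        = TL.br (E.i (μ x)) (s y) (s z) + TL.br (s x) (E.i (μ y)) (s z)
          + TL.br (s x) (s y) (E.i (μ z))
          - (Dl (s (TQ.br x y z)) - s (Dq (TQ.br x y z))) := by
      rw [hOb', map_sub, map_sub, map_sub, ← hrestrict, hOm, hOm, hOm, hOm,
        map_sub, hDl', hDlsx, hDlsy, hDlsz,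
        (TL.lin₁ (s y) (s z)).map_add, (TL.lin₂ (s x) (s z)).map_add,
        (TL.lin₃ (s x) (s y)).map_add, hDq', map_add, map_add]
      abel
    rw [lhs_eq]
    -- expand the right-hand side
    rw [map_add, map_add, map_add, map_neg, map_smul, map_smul,
      hμ (TQ.br x y z), hΦ, hΦ, hΦ,
      swap_first_to_last TL a b c (E.i (μ x)) (s y) (s z) hux hsy hsz,
      swap_middle TL a b c (s x) (E.i (μ y)) (s z) hsx huy hsz]
    abel
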